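/- Let f : ℝⁿ → ℝᵐ be surjective. If a neural network g = ω ∘ h_k ∘ ... ∘ h_1 ∘ ι has an activation bottleneck at layer h_i and all layers after h_i are Lipschitz continuous, then for every M > 0 there exists x ∈ ℝⁿ with ‖f(x) − g(x)‖ ≥ M. -/
import Mathlib


open Bornology

theorem network_with_bottleneck_unbounded_error
    {n m k : ℕ} (hm : 1 ≤ m) (d : Fin (k + 1) → ℕ)
    (f : EuclideanSpace ℝ (Fin n) → EuclideanSpace ℝ (Fin m))
    (hf : Function.Surjective f)
    (ι : EuclideanSpace ℝ (Fin n) → EuclideanSpace ℝ (Fin (d 0)))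
    (h : ∀ j : Fin k,
      EuclideanSpace ℝ (Fin (d j.castSucc)) → EuclideanSpace ℝ (Fin (d j.succ)))
    (ω : EuclideanSpace ℝ (Fin (d (Fin.last k))) → EuclideanSpace ℝ (Fin m))
    (i : Fin k)
    (hbot : IsBounded (Set.range (h i)))
    (L : Fin k → NNReal) (Lω : NNReal)
    (hlip : ∀ j : Fin k, i < j → LipschitzWith (L j) (h j))
    (hω : LipschitzWith Lω ω)
    (g : EuclideanSpace ℝ (Fin n) → EuclideanSpace ℝ (Fin m))
    (hg : g = fun x => ω
      (Fin.induction (motive := fun j => EuclideanSpace ℝ (Fin (d j)))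
        (ι x) (fun j ih => h j ih) (Fin.last k))) :
    ∀ M : ℝ, 0 < M → ∃ x, M ≤ ‖f x - g x‖ := by
  intro M hM
  set chain : EuclideanSpace ℝ (Fin n) → ∀ j : Fin (k+1), EuclideanSpace ℝ (Fin (d j)) :=
    fun x => fun j => Fin.induction (motive := fun j => EuclideanSpace ℝ (Fin (d j)))
      (ι x) (fun j ih => h j ih) j with hchain
  have key : ∀ j : Fin (k+1), i.succ ≤ j →
      IsBounded (Set.range fun x => chain x j) := by
    intro j
    induction j using Fin.induction with
    | zero =>
      intro hle
      exfalso
      simp [Fin.le_def] at hle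
    | succ j ih =>
      intro hle
      have hle' : i ≤ j := by
        simp only [Fin.le_def, Fin.val_succ] at hle ⊢
        omega
      have step : (fun x => chain x j.succ)
          = (h j) ∘ (fun x => chain x j.castSucc) := by
        funext x
        simp [hchain]
      rcases eq_or_lt_of_le hle' with heq | hlt
      · subst heq
        rw [step]
        exact hbot.subset (by
          rintro y ⟨x, rfl⟩
          exact ⟨chain x i.castSucc, rfl⟩)
      · have hb : IsBounded (Set.range fun x => chain x j.castSucc) := by
          apply ih
          simp only [Fin.le_def, Fin.val_succ, Fin.coe_castSucc] at *
          omega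
        rw [step]
        have := ((hlip j hlt).isBounded_image hb)
        exact this.subset (by
          rintro y ⟨x, rfl⟩
          exact ⟨chain x j.castSucc, ⟨x, rfl⟩, rfl⟩)
  have hlast : IsBounded (Set.range fun x => chain x (Fin.last k)) := by
    apply key
    simp only [Fin.le_def, Fin.val_succ, Fin.val_last]
    omega
  have hgbdd : IsBounded (Set.range g) := by
    have := hω.isBounded_image hlast
    refine this.subset ?_
    rintro y ⟨x, rfl⟩
    exact ⟨chain x (Fin.last k), ⟨x, rfl⟩, by rw [hg]⟩
  obtain ⟨C, hC⟩ := (isBounded_iff_forall_norm_le).1 hgbdd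
  have hC0 : 0 ≤ C := le_trans (norm_nonneg _) (hC (g 0) ⟨0, rfl⟩)
  set z : EuclideanSpace ℝ (Fin m) := EuclideanSpace.single ⟨0, hm⟩ (M + C) with hz
  obtain ⟨x, hx⟩ := hf z
  refine ⟨x, ?_⟩
  have hzn : ‖z‖ = M + C := by
    rw [hz, EuclideanSpace.norm_single, Real.norm_of_nonneg (by linarith)]
  have hgx : ‖g x‖ ≤ C := hC (g x) ⟨x, rfl⟩
  have : ‖f x‖ - ‖g x‖ ≤ ‖f x - g x‖ := norm_sub_norm_le _ _
  rw [hx] at this ⊢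
  rw [hzn] at this
  linarith
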